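/- arXiv:1710.09951 — 6 statements merged into one kernel-verified Lean document; each statement's English description precedes it below -/
import Mathlib

section
/- Let μ₁, μ₂ be sub-distributions over countable sets A₁, A₂ and let S₁ ⊆ A₁, S₂ ⊆ A₂. If there exists a coupling of (μ₁, μ₂) with support contained in {(a₁,a₂) : a₁ ∈ S₁ → a₂ ∈ S₂}, then μ₁(S₁) ≤ μ₂(S₂). Conversely, if μ₁(S₁) ≤ μ₂(S₂) and μ₁, μ₂ have equal total weight, such a coupling exists. -/
open scoped ENNReal

noncomputable section

/-- A discrete sub-distribution: total mass at most 1. -/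
def IsSubDist {A : Type*} (μ : A → ℝ≥0∞) : Prop := ∑' a, μ a ≤ 1

/-- Mass of a set under `μ`. -/
def setSum {A : Type*} (μ : A → ℝ≥0∞) (S : Set A) : ℝ≥0∞ := ∑' a : S, μ (a : A)

/-- `μ` is a coupling of `(μ₁, μ₂)`: a joint sub-distribution with the given marginals. -/
def IsCoupling {A₁ A₂ : Type*} (μ : A₁ × A₂ → ℝ≥0∞)
    (μ₁ : A₁ → ℝ≥0∞) (μ₂ : A₂ → ℝ≥0∞) : Prop :=
  IsSubDist μ ∧ (∀ a₁, ∑' a₂, μ (a₁, a₂) = μ₁ a₁) ∧ (∀ a₂, ∑' a₁, μ (a₁, a₂) = μ₂ a₂)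

/-- Image of a set under a relation. -/
def relImage {A₁ A₂ : Type*} (R : Set (A₁ × A₂)) (S : Set A₁) : Set A₂ :=
  {a₂ | ∃ a₁ ∈ S, (a₁, a₂) ∈ R}

/-- `R⋆ = R ∪ (A₁ × {⋆}) ∪ ({⋆} × A₂)`, with `⋆` modelled by `none`. -/
def starRel {A₁ A₂ : Type*} (R : Set (A₁ × A₂)) : Set (Option A₁ × Option A₂) :=
  {p | match p with
       | (some a₁, some a₂) => (a₁, a₂) ∈ R
       | (some _, none) => True
       | (none, some _) => True
       | (none, none) => False}

/-- `(ε, δ)`-approximate `R`-lifting of `(μ₁, μ₂)`, witnessed by two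
sub-distributions over `A₁⋆ × A₂⋆` with marginal, support, and ε-distance conditions. -/
def ApproxLift {A₁ A₂ : Type*} (ε δ : ℝ) (R : Set (A₁ × A₂))
    (μ₁ : A₁ → ℝ≥0∞) (μ₂ : A₂ → ℝ≥0∞) : Prop :=
  ∃ μL μR : Option A₁ × Option A₂ → ℝ≥0∞,
    IsSubDist μL ∧ IsSubDist μR ∧
    (∀ a₁, ∑' o, μL (some a₁, o) = μ₁ a₁) ∧ (∀ o, μL (none, o) = 0) ∧
    (∀ a₂, ∑' o, μR (o, some a₂) = μ₂ a₂) ∧ (∀ o, μR (o, none) = 0) ∧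
    {p | μL p ≠ 0} ⊆ starRel R ∧ {p | μR p ≠ 0} ⊆ starRel R ∧
    ∀ S : Set (Option A₁ × Option A₂),
      setSum μL S ≤ ENNReal.ofReal (Real.exp ε) * setSum μR S + ENNReal.ofReal δ

/-!
If a coupling is supported on `{p | p.1 ∈ S₁ → p.2 ∈ S₂}`, every unit of `μ₁`-mass in `S₁` is sent
into `S₂`, so `μ₁(S₁) ≤ μ₂(S₂)`. Conversely, write `μ₂ = ν + ρ`, where `ν ≤ μ₂` is a rescaling of
`μ₂` on `S₂` of mass `μ₁(S₁)`. Pairing `μ₁` on `S₁` with `ν` and `μ₁` on `S₁ᶜ` with `ρ` by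
(normalised) product couplings, and adding the two, gives the required coupling: the pieces have
equal masses because `μ₁` and `μ₂` have the same finite total weight.
-/

section

variable {A A₁ A₂ : Type*}

def HasMarginals (μ : A₁ × A₂ → ℝ≥0∞) (μ₁ : A₁ → ℝ≥0∞) (μ₂ : A₂ → ℝ≥0∞) : Prop :=
  (∀ a₁, ∑' a₂, μ (a₁, a₂) = μ₁ a₁) ∧ (∀ a₂, ∑' a₁, μ (a₁, a₂) = μ₂ a₂)

def prodCoupling (ν₁ : A₁ → ℝ≥0∞) (ν₂ : A₂ → ℝ≥0∞) : A₁ × A₂ → ℝ≥0∞ :=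
  fun p => ν₁ p.1 * ν₂ p.2 / ∑' a₂, ν₂ a₂

lemma setSum_eq_tsum_indicator (μ : A → ℝ≥0∞) (S : Set A) :
    setSum μ S = ∑' a, S.indicator μ a :=
  tsum_subtype S μ

lemma setSum_mono (μ : A → ℝ≥0∞) {S T : Set A} (h : S ⊆ T) : setSum μ S ≤ setSum μ T :=
  ENNReal.tsum_mono_subtype μ h

lemma setSum_le_tsum (μ : A → ℝ≥0∞) (S : Set A) : setSum μ S ≤ ∑' a, μ a :=
  ENNReal.tsum_comp_le_tsum_of_injective Subtype.val_injective μ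

lemma setSum_add_setSum_compl (μ : A → ℝ≥0∞) (S : Set A) :
    setSum μ S + setSum μ Sᶜ = ∑' a, μ a :=
  ENNReal.summable.tsum_add_tsum_compl ENNReal.summable

lemma HasMarginals.isCoupling {μ : A₁ × A₂ → ℝ≥0∞} {μ₁ : A₁ → ℝ≥0∞} {μ₂ : A₂ → ℝ≥0∞}
    (hμ : HasMarginals μ μ₁ μ₂) (h₁ : IsSubDist μ₁) : IsCoupling μ μ₁ μ₂ := by
  refine ⟨?_, hμ⟩
  calc ∑' p, μ p = ∑' a₁, ∑' a₂, μ (a₁, a₂) := ENNReal.tsum_prod'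
    _ = ∑' a₁, μ₁ a₁ := tsum_congr hμ.1
    _ ≤ 1 := h₁

lemma HasMarginals.add {μ ν : A₁ × A₂ → ℝ≥0∞} {μ₁ ν₁ : A₁ → ℝ≥0∞} {μ₂ ν₂ : A₂ → ℝ≥0∞}
    (hμ : HasMarginals μ μ₁ μ₂) (hν : HasMarginals ν ν₁ ν₂) :
    HasMarginals (μ + ν) (μ₁ + ν₁) (μ₂ + ν₂) :=
  ⟨fun a₁ => by simp only [Pi.add_apply, ENNReal.tsum_add, hμ.1, hν.1],
   fun a₂ => by simp only [Pi.add_apply, ENNReal.tsum_add, hμ.2, hν.2]⟩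

/-- The easy half of Strassen's theorem. -/
theorem HasMarginals.setSum_le_setSum_relImage {μ : A₁ × A₂ → ℝ≥0∞} {μ₁ : A₁ → ℝ≥0∞}
    {μ₂ : A₂ → ℝ≥0∞} (hμ : HasMarginals μ μ₁ μ₂) {R : Set (A₁ × A₂)}
    (hR : {p | μ p ≠ 0} ⊆ R) (S : Set A₁) :
    setSum μ₁ S ≤ setSum μ₂ (relImage R S) := by
  have hrow : ∀ a₁ ∈ S, ∑' a₂ : relImage R S, μ (a₁, a₂) = μ₁ a₁ := fun a₁ ha₁ => by
    rw [← hμ.1 a₁]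
    exact tsum_subtype_eq_of_support_subset fun a₂ hne =>
      show a₂ ∈ relImage R S from ⟨a₁, ha₁, hR hne⟩
  calc setSum μ₁ S = ∑' a₁ : S, ∑' a₂ : relImage R S, μ (a₁, a₂) :=
        tsum_congr fun a₁ => (hrow a₁ a₁.2).symm
    _ ≤ ∑' a₁, ∑' a₂ : relImage R S, μ (a₁, a₂) :=
        ENNReal.tsum_comp_le_tsum_of_injective Subtype.val_injective _
    _ = ∑' a₂ : relImage R S, ∑' a₁, μ (a₁, a₂) := ENNReal.tsum_comm
    _ = setSum μ₂ (relImage R S) := tsum_congr fun a₂ => hμ.2 a₂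

lemma hasMarginals_prodCoupling {ν₁ : A₁ → ℝ≥0∞} {ν₂ : A₂ → ℝ≥0∞}
    (h : ∑' a₁, ν₁ a₁ = ∑' a₂, ν₂ a₂) (hfin : ∑' a₂, ν₂ a₂ ≠ ∞) :
    HasMarginals (prodCoupling ν₁ ν₂) ν₁ ν₂ := by
  have hzero₁ : ∀ a₁, ∑' a₂, ν₂ a₂ = 0 → ν₁ a₁ = 0 := fun a₁ h₀ =>
    le_antisymm ((ENNReal.le_tsum a₁).trans (h.trans h₀).le) bot_le
  have hzero₂ : ∀ a₂, ∑' a₂, ν₂ a₂ = 0 → ν₂ a₂ = 0 := fun a₂ h₀ =>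
    le_antisymm ((ENNReal.le_tsum a₂).trans h₀.le) bot_le
  refine ⟨fun a₁ => ?_, fun a₂ => ?_⟩
  · simp only [prodCoupling, div_eq_mul_inv, ENNReal.tsum_mul_right, ENNReal.tsum_mul_left]
    exact ENNReal.mul_div_cancel_right' (hzero₁ a₁) fun h => absurd h hfin
  · simp only [prodCoupling, div_eq_mul_inv, ENNReal.tsum_mul_right]
    rw [h, mul_comm _ (ν₂ a₂)]
    exact ENNReal.mul_div_cancel_right' (hzero₂ a₂) fun h => absurd h hfin

lemma prodCoupling_ne_zero {ν₁ : A₁ → ℝ≥0∞} {ν₂ : A₂ → ℝ≥0∞} {p : A₁ × A₂}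
    (hp : prodCoupling ν₁ ν₂ p ≠ 0) : ν₁ p.1 ≠ 0 ∧ ν₂ p.2 ≠ 0 := by
  refine ⟨fun h => hp ?_, fun h => hp ?_⟩ <;> simp [prodCoupling, h]

lemma exists_le_tsum_eq_of_le_setSum {μ : A → ℝ≥0∞} {S : Set A} {t : ℝ≥0∞}
    (hS : setSum μ S ≠ ∞) (ht : t ≤ setSum μ S) :
    ∃ ν ≤ μ, (∀ a ∉ S, ν a = 0) ∧ ∑' a, ν a = t := by
  set c := t / setSum μ S
  have hc : c ≤ 1 := (ENNReal.div_le_div_right ht _).trans ENNReal.div_self_le_one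
  refine ⟨fun a => c * S.indicator μ a, fun a => ?_, fun a ha => ?_, ?_⟩
  · exact mul_le_of_le_one_of_le hc (Set.indicator_le_self S μ a)
  · simp [Set.indicator_of_notMem ha]
  · rw [ENNReal.tsum_mul_left, ← setSum_eq_tsum_indicator]
    exact ENNReal.div_mul_cancel' (fun h => le_antisymm (h ▸ ht) bot_le) fun h => absurd h hS

theorem exists_hasMarginals_of_setSum_le {μ₁ : A₁ → ℝ≥0∞} {μ₂ : A₂ → ℝ≥0∞} {S₁ : Set A₁}
    {S₂ : Set A₂} (htot : ∑' a, μ₁ a = ∑' a, μ₂ a) (hfin : ∑' a, μ₂ a ≠ ∞)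
    (hle : setSum μ₁ S₁ ≤ setSum μ₂ S₂) :
    ∃ μ : A₁ × A₂ → ℝ≥0∞, HasMarginals μ μ₁ μ₂ ∧
      {p | μ p ≠ 0} ⊆ {p : A₁ × A₂ | p.1 ∈ S₁ → p.2 ∈ S₂} := by
  have hm₁ : setSum μ₁ S₁ ≠ ∞ := ((setSum_le_tsum μ₁ S₁).trans_lt (htot ▸ hfin.lt_top)).ne
  obtain ⟨ν, hνμ, hνS, hνsum⟩ :=
    exists_le_tsum_eq_of_le_setSum ((setSum_le_tsum μ₂ S₂).trans_lt hfin.lt_top).ne hle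
  set ρ := μ₂ - ν
  have hνρ : ν + ρ = μ₂ := add_tsub_cancel_of_le hνμ
  have hρsum : ∑' a, S₁ᶜ.indicator μ₁ a = ∑' a, ρ a := by
    rw [← ENNReal.add_right_inj hm₁, ← setSum_eq_tsum_indicator, setSum_add_setSum_compl, htot,
      ← hνρ, ← hνsum]
    exact ENNReal.tsum_add
  refine ⟨prodCoupling (S₁.indicator μ₁) ν + prodCoupling (S₁ᶜ.indicator μ₁) ρ, ?_, ?_⟩
  · have hν := hasMarginals_prodCoupling (ν₁ := S₁.indicator μ₁)
      (by rw [← setSum_eq_tsum_indicator, hνsum]) (hνsum ▸ hm₁)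
    have hρ := hasMarginals_prodCoupling hρsum (ne_top_of_le_ne_top hfin
      (ENNReal.tsum_le_tsum fun _ => tsub_le_self))
    have h := hν.add hρ
    rwa [Set.indicator_self_add_compl, hνρ] at h
  · rintro ⟨a₁, a₂⟩ hne ha₁
    have hρ₀ : prodCoupling (S₁ᶜ.indicator μ₁) ρ (a₁, a₂) = 0 := by simp [prodCoupling, ha₁]
    rw [Set.mem_ofPred_eq, Pi.add_apply, hρ₀, add_zero] at hne
    by_contra ha₂
    exact (prodCoupling_ne_zero hne).2 (hνS a₂ ha₂)

end

theorem imp_coupling_general {A₁ A₂ : Type*}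
    (μ₁ : A₁ → ℝ≥0∞) (μ₂ : A₂ → ℝ≥0∞) (S₁ : Set A₁) (S₂ : Set A₂)
    (h₁ : IsSubDist μ₁) (h₂ : IsSubDist μ₂) :
    ((∃ μ : A₁ × A₂ → ℝ≥0∞, IsCoupling μ μ₁ μ₂ ∧
        {p | μ p ≠ 0} ⊆ {p : A₁ × A₂ | p.1 ∈ S₁ → p.2 ∈ S₂}) →
      setSum μ₁ S₁ ≤ setSum μ₂ S₂) ∧
    ((∑' a, μ₁ a = ∑' a, μ₂ a) → setSum μ₁ S₁ ≤ setSum μ₂ S₂ →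
      ∃ μ : A₁ × A₂ → ℝ≥0∞, IsCoupling μ μ₁ μ₂ ∧
        {p | μ p ≠ 0} ⊆ {p : A₁ × A₂ | p.1 ∈ S₁ → p.2 ∈ S₂}) := by
  refine ⟨fun ⟨μ, ⟨_, hμ⟩, hsupp⟩ => ?_, fun htot hle => ?_⟩
  · calc setSum μ₁ S₁ ≤ setSum μ₂ (relImage {p : A₁ × A₂ | p.1 ∈ S₁ → p.2 ∈ S₂} S₁) :=
          HasMarginals.setSum_le_setSum_relImage hμ hsupp S₁
      _ ≤ setSum μ₂ S₂ := setSum_mono μ₂ fun _ ⟨_, ha₁, h⟩ => h ha₁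
  · obtain ⟨μ, hμ, hsupp⟩ :=
      exists_hasMarginals_of_setSum_le htot (h₂.trans_lt ENNReal.one_lt_top).ne hle
    exact ⟨μ, hμ.isCoupling h₁, hsupp⟩

theorem imp_coupling {A₁ A₂ : Type*} [Countable A₁] [Countable A₂]
    (μ₁ : A₁ → ℝ≥0∞) (μ₂ : A₂ → ℝ≥0∞) (S₁ : Set A₁) (S₂ : Set A₂)
    (h₁ : IsSubDist μ₁) (h₂ : IsSubDist μ₂) :
    ((∃ μ : A₁ × A₂ → ℝ≥0∞, IsCoupling μ μ₁ μ₂ ∧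
        {p | μ p ≠ 0} ⊆ {p : A₁ × A₂ | p.1 ∈ S₁ → p.2 ∈ S₂}) →
      setSum μ₁ S₁ ≤ setSum μ₂ S₂) ∧
    ((∑' a, μ₁ a = ∑' a, μ₂ a) → setSum μ₁ S₁ ≤ setSum μ₂ S₂ →
      ∃ μ : A₁ × A₂ → ℝ≥0∞, IsCoupling μ μ₁ μ₂ ∧
        {p | μ p ≠ 0} ⊆ {p : A₁ × A₂ | p.1 ∈ S₁ → p.2 ∈ S₂}) :=
  imp_coupling_general μ₁ μ₂ S₁ S₂ h₁ h₂
end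
end

section
/- If M : D → Distr(R) is such that for every pair of adjacent inputs (d₁,d₂) there exists an (ε,δ)-approximate lifting of the equality relation relating M(d₁) and M(d₂), then M is (ε,δ)-differentially private: for all adjacent (d₁,d₂) and all S ⊆ R, M(d₁)(S) ≤ e^ε · M(d₂)(S) + δ. -/
open scoped ENNReal

noncomputable section

lemma tsum_option_of_none_zero {α : Type*} (f : Option α → ℝ≥0∞) (h0 : f none = 0) :
    ∑' a, f a = ∑' a : α, f (some a) := by
  refine (Function.Injective.tsum_eq (Option.some_injective α) ?_).symm
  intro x hx
  cases x with
  | none => exact absurd h0 hx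
  | some a => exact ⟨a, rfl⟩

theorem alift_implies_dp {D R : Type*} [Countable R]
    (Adj : D → D → Prop) (M : D → R → ℝ≥0∞)
    (hM : ∀ d, ∑' r, M d r = 1) (ε δ : ℝ)
    (h : ∀ d₁ d₂, Adj d₁ d₂ → ApproxLift ε δ {p : R × R | p.1 = p.2} (M d₁) (M d₂)) :
    ∀ d₁ d₂, Adj d₁ d₂ → ∀ S : Set R,
      setSum (M d₁) S ≤ ENNReal.ofReal (Real.exp ε) * setSum (M d₂) S +
        ENNReal.ofReal δ := by
  intro d₁ d₂ hadj S
  obtain ⟨μL, μR, _, _, hL1, hLnone, hR1, hRnone, hsuppL, hsuppR, hdist⟩ := h d₁ d₂ hadj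
  set T : Set (Option R × Option R) := {p | ∃ a ∈ S, p.1 = some a} with hTdef
  have hmemT : ∀ (a₁ : R) (o : Option R), ((some a₁, o) ∈ T) ↔ a₁ ∈ S := by
    intro a₁ o
    constructor
    · rintro ⟨a, ha, hEq⟩
      have : a₁ = a := Option.some.inj hEq
      exact this ▸ ha
    · intro ha; exact ⟨a₁, ha, rfl⟩
  have hnoneT : ∀ o : Option R, (none, o) ∉ T := by
    rintro o ⟨a, _, hEq⟩; simp at hEq
  -- rewrite setSum of T as a sum over Option R of inner sums
  have hform : ∀ ν : Option R × Option R → ℝ≥0∞,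
      setSum ν T = ∑' a₁ : R, S.indicator (fun a₁ => ∑' o, ν (some a₁, o)) a₁ := by
    intro ν
    rw [setSum, tsum_subtype, ENNReal.tsum_prod',
        tsum_option_of_none_zero _ (by simp [Set.indicator_of_notMem (hnoneT _)])]
    refine tsum_congr fun a₁ => ?_
    by_cases ha : a₁ ∈ S
    · rw [Set.indicator_of_mem ha]
      exact tsum_congr fun o => Set.indicator_of_mem ((hmemT a₁ o).2 ha) ν
    · rw [Set.indicator_of_notMem ha]
      exact (tsum_congr fun o =>
        Set.indicator_of_notMem (fun hm => ha ((hmemT a₁ o).1 hm)) ν).trans tsum_zero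
  have hLsum : setSum (M d₁) S = setSum μL T := by
    rw [hform, setSum, tsum_subtype]
    refine tsum_congr fun a₁ => ?_
    by_cases ha : a₁ ∈ S
    · rw [Set.indicator_of_mem ha, Set.indicator_of_mem ha, hL1]
    · rw [Set.indicator_of_notMem ha, Set.indicator_of_notMem ha]
  have hRsum : setSum μR T ≤ setSum (M d₂) S := by
    rw [hform, setSum, tsum_subtype]
    refine ENNReal.tsum_le_tsum fun a₁ => ?_
    by_cases ha : a₁ ∈ S
    · rw [Set.indicator_of_mem ha, Set.indicator_of_mem ha]
      have hsingle : ∑' o, μR (some a₁, o) = μR (some a₁, some a₁) := by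
        refine tsum_eq_single (some a₁) fun o ho => ?_
        cases o with
        | none => exact hRnone _
        | some a₂ =>
          by_contra hne
          have := hsuppR hne
          simp only [starRel, Set.mem_setOf_eq] at this
          exact ho (by rw [this])
      rw [hsingle, ← hR1 a₁]
      exact ENNReal.le_tsum (some a₁)
    · rw [Set.indicator_of_notMem ha, Set.indicator_of_notMem ha]
  calc setSum (M d₁) S = setSum μL T := hLsum
    _ ≤ ENNReal.ofReal (Real.exp ε) * setSum μR T + ENNReal.ofReal δ := hdist T
    _ ≤ ENNReal.ofReal (Real.exp ε) * setSum (M d₂) S + ENNReal.ofReal δ := by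
        gcongr
end
end

section
/- Let μ₁, μ₂ be sub-distributions over A₁, A₂ of equal total weight, and R ⊆ A₁ × A₂. Then there exists a (0,0)-approximate lifting of R relating μ₁ and μ₂ if and only if there exists an exact lifting: a single coupling of (μ₁, μ₂) with support contained in R. -/
open scoped ENNReal

noncomputable section

/-- tsum over `Option` when the `none` value vanishes. -/
lemma tsum_option_of_none_eq_zero {α : Type*} {f : Option α → ℝ≥0∞} (h : f none = 0) :
    ∑' a, f (some a) = ∑' o, f o := by
  apply (Option.some_injective α).tsum_eq
  intro o ho
  cases o with
  | none => exact absurd h ho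
  | some a => exact ⟨a, rfl⟩

lemma setSum_singleton {A : Type*} (μ : A → ℝ≥0∞) (p : A) :
    setSum μ {p} = μ p := by
  unfold setSum
  rw [tsum_eq_single (⟨p, rfl⟩ : ({p} : Set A))]
  intro b hb
  have hbp : (b : A) = p := b.2
  exact absurd (Subtype.ext hbp) hb

theorem alift_zero_iff_exact {A₁ A₂ : Type*} [Countable A₁] [Countable A₂]
    (μ₁ : A₁ → ℝ≥0∞) (μ₂ : A₂ → ℝ≥0∞) (R : Set (A₁ × A₂))
    (h₁ : IsSubDist μ₁) (h₂ : IsSubDist μ₂)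
    (hw : ∑' a, μ₁ a = ∑' a, μ₂ a) :
    ApproxLift 0 0 R μ₁ μ₂ ↔
      ∃ μ : A₁ × A₂ → ℝ≥0∞, IsCoupling μ μ₁ μ₂ ∧ {p | μ p ≠ 0} ⊆ R := by
  constructor
  · rintro ⟨μL, μR, hLs, hRs, hL1, hLn, hR2, hRn, hLsupp, hRsupp, hdist⟩
    -- pointwise μL ≤ μR
    have hpt : ∀ p, μL p ≤ μR p := by
      intro p
      have := hdist {p}
      simpa [setSum_singleton, Real.exp_zero, ENNReal.ofReal_one, ENNReal.ofReal_zero] using this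
    -- total mass of μL is ∑ μ₁
    have htotL : ∑' p, μL p = ∑' a, μ₁ a := by
      rw [ENNReal.tsum_prod']
      rw [← tsum_option_of_none_eq_zero (f := fun o₁ => ∑' o₂, μL (o₁, o₂)) (by simp [hLn])]
      exact tsum_congr hL1
    have htotR : ∑' p, μR p = ∑' a, μ₂ a := by
      rw [ENNReal.tsum_prod', ENNReal.tsum_comm]
      rw [← tsum_option_of_none_eq_zero (f := fun o₂ => ∑' o₁, μR (o₁, o₂)) (by simp [hRn])]
      exact tsum_congr hR2
    have htot : ∑' p, μL p = ∑' p, μR p := by rw [htotL, htotR, hw]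
    have hfin : ∑' p, μL p ≠ ∞ := by
      rw [htotL]; exact (h₁.trans_lt ENNReal.one_lt_top).ne
    -- μL = μR
    have heq : ∀ p, μL p = μR p := by
      intro p
      by_contra hne
      have hlt : μL p < μR p := lt_of_le_of_ne (hpt p) hne
      exact absurd htot (ne_of_lt (ENNReal.tsum_lt_tsum hfin hpt hlt))
    have hLnone2 : ∀ o, μL (o, none) = 0 := fun o => (heq _).trans (hRn o)
    refine ⟨fun p => μL (some p.1, some p.2), ⟨?_, ?_, ?_⟩, ?_⟩
    · -- sub-distribution
      refine le_trans ?_ hLs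
      rw [ENNReal.tsum_prod' (f := fun p => μL (some p.1, some p.2)), ENNReal.tsum_prod' (f := μL)]
      rw [← tsum_option_of_none_eq_zero (f := fun o₁ => ∑' o₂, μL (o₁, o₂)) (by simp [hLn])]
      refine ENNReal.tsum_le_tsum fun a₁ => ?_
      exact le_of_eq (tsum_option_of_none_eq_zero (f := fun o₂ => μL (some a₁, o₂)) (hLnone2 _))
    · intro a₁
      show ∑' a₂, μL (some a₁, some a₂) = μ₁ a₁
      rw [tsum_option_of_none_eq_zero (f := fun o₂ => μL (some a₁, o₂)) (hLnone2 _)]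
      exact hL1 a₁
    · intro a₂
      calc ∑' a₁, μL (some a₁, some a₂)
          = ∑' a₁, μR (some a₁, some a₂) := tsum_congr fun a₁ => heq _
        _ = ∑' o, μR (o, some a₂) :=
            tsum_option_of_none_eq_zero (f := fun o => μR (o, some a₂))
              (by show μR (none, some a₂) = 0; rw [← heq]; exact hLn _)
        _ = μ₂ a₂ := hR2 a₂
    · intro p hp
      have := hLsupp hp
      simpa [starRel] using this
  · rintro ⟨μ, ⟨hs, hm1, hm2⟩, hsupp⟩
    set ν : Option A₁ × Option A₂ → ℝ≥0∞ := fun p =>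
      match p with
      | (some a₁, some a₂) => μ (a₁, a₂)
      | _ => 0 with hν
    have hνtot : ∑' p, ν p = ∑' p, μ p := by
      rw [ENNReal.tsum_prod', ENNReal.tsum_prod' (f := μ)]
      rw [← tsum_option_of_none_eq_zero (f := fun o₁ => ∑' o₂, ν (o₁, o₂)) (by simp [hν])]
      refine tsum_congr fun a₁ => ?_
      rw [← tsum_option_of_none_eq_zero (f := fun o₂ => ν (some a₁, o₂)) (by simp [hν])]
    have hνsub : IsSubDist ν := by rw [IsSubDist, hνtot]; exact hs
    have hν1 : ∀ a₁, ∑' o, ν (some a₁, o) = μ₁ a₁ := by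
      intro a₁
      rw [← tsum_option_of_none_eq_zero (f := fun o₂ => ν (some a₁, o₂)) (by simp [hν])]
      exact hm1 a₁
    have hν2 : ∀ a₂, ∑' o, ν (o, some a₂) = μ₂ a₂ := by
      intro a₂
      rw [← tsum_option_of_none_eq_zero (f := fun o₁ => ν (o₁, some a₂)) (by simp [hν])]
      exact hm2 a₂
    have hνsupp : {p | ν p ≠ 0} ⊆ starRel R := by
      rintro ⟨o₁, o₂⟩ hp
      cases o₁ <;> cases o₂ <;> simp_all [hν, starRel]
      exact hsupp hp
    refine ⟨ν, ν, hνsub, hνsub, hν1, by simp [hν], hν2, by simp [hν], hνsupp, hνsupp, ?_⟩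
    intro S
    simp [Real.exp_zero, ENNReal.ofReal_one, ENNReal.ofReal_zero]
end
end

section
/- (Null coupling of Laplace distributions.) For any integers v₁, v₂ and ε > 0, there is a (0,0)-approximate lifting of the relation {(x₁,x₂) ∈ ℤ×ℤ : x₁ − v₁ = x₂ − v₂} relating the discrete Laplace distributions Lap_ε(v₁) and Lap_ε(v₂). -/
open scoped ENNReal

noncomputable section

/-- The discrete Laplace distribution over `ℤ` with parameter `ε` and mean `t`. -/
def lap (ε : ℝ) (t : ℤ) : ℤ → ℝ≥0∞ := fun v =>
  ENNReal.ofReal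
    (Real.exp (-ε * |((v - t : ℤ) : ℝ)|) / ∑' z : ℤ, Real.exp (-ε * |(z : ℝ)|))


lemma summable_exp_abs (ε : ℝ) (hε : 0 < ε) : Summable (fun z : ℤ => Real.exp (-ε * |(z:ℝ)|)) := by
  have h : ∀ z : ℤ, Real.exp (-ε * |(z:ℝ)|) = Real.exp (-ε) ^ z.natAbs := by
    intro z
    rw [← Real.exp_nat_mul]
    congr 1
    rw [mul_comm]
    congr 1
    rw [Nat.cast_natAbs]
    push_cast
    ring
  simp only [funext h]
  have hg : Summable (fun n : ℕ => Real.exp (-ε) ^ n) :=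
    summable_geometric_of_lt_one (Real.exp_nonneg _) (by rw [Real.exp_lt_one_iff]; linarith)
  apply Summable.of_nat_of_neg <;> simpa using hg

lemma tsum_pos_W (ε : ℝ) (hε : 0 < ε) : 0 < ∑' z : ℤ, Real.exp (-ε * |(z:ℝ)|) := by
  have hs := summable_exp_abs ε hε
  have h0 : Real.exp (-ε * |((0:ℤ):ℝ)|) ≤ ∑' z : ℤ, Real.exp (-ε * |(z:ℝ)|) :=
    Summable.le_tsum hs 0 (fun _ _ => (Real.exp_pos _).le)
  simp only [neg_mul] at h0 ⊢
  simp at h0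
  linarith

lemma lap_tsum (ε : ℝ) (hε : 0 < ε) (t : ℤ) : ∑' a : ℤ, lap ε t a = 1 := by
  have hWpos := tsum_pos_W ε hε
  have hshift : Summable (fun a : ℤ => Real.exp (-ε * |((a - t : ℤ) : ℝ)|)) := by
    have := ((Equiv.subRight t).summable_iff (f := fun z : ℤ => Real.exp (-ε * |(z:ℝ)|))).2
      (summable_exp_abs ε hε)
    exact this.congr (fun a => by simp [Function.comp_apply, Equiv.subRight_apply])
  have hsum : Summable (fun a : ℤ =>
      Real.exp (-ε * |((a - t : ℤ) : ℝ)|) / ∑' z : ℤ, Real.exp (-ε * |(z:ℝ)|)) :=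
    hshift.div_const _
  unfold lap
  rw [← ENNReal.ofReal_tsum_of_nonneg (fun a => by positivity) hsum]
  rw [tsum_div_const]
  have heq : (∑' a : ℤ, Real.exp (-ε * |((a - t : ℤ) : ℝ)|))
      = ∑' z : ℤ, Real.exp (-ε * |(z:ℝ)|) := by
    have := (Equiv.subRight t).tsum_eq (fun z : ℤ => Real.exp (-ε * |(z:ℝ)|))
    simpa [Equiv.subRight_apply, Int.cast_sub] using this

  rw [heq, div_self (ne_of_gt hWpos), ENNReal.ofReal_one]

lemma lap_congr (ε : ℝ) (v₁ v₂ a b : ℤ) (h : a - v₁ = b - v₂) :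
    lap ε v₁ a = lap ε v₂ b := by
  unfold lap
  rw [h]

theorem lap_null_coupling (ε : ℝ) (hε : 0 < ε) (v₁ v₂ : ℤ) :
    ApproxLift 0 0 {p : ℤ × ℤ | p.1 - v₁ = p.2 - v₂} (lap ε v₁) (lap ε v₂) := by
  classical
  set μ : Option ℤ × Option ℤ → ℝ≥0∞ := fun p =>
    match p with
    | (some a, some b) => if b = a - v₁ + v₂ then lap ε v₁ a else 0
    | _ => 0 with hμ
  have hval : ∀ a : ℤ, μ (some a, some (a - v₁ + v₂)) = lap ε v₁ a := by
    intro a; simp [hμ]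
  have hzero1 : ∀ a : ℤ, ∀ o, o ≠ some (a - v₁ + v₂) → μ (some a, o) = 0 := by
    intro a o ho
    match o with
    | none => simp [hμ]
    | some b => simp only [hμ]; rw [if_neg]; intro h; exact ho (by rw [h])
  have hmarg1 : ∀ a₁ : ℤ, ∑' o, μ (some a₁, o) = lap ε v₁ a₁ := by
    intro a₁
    rw [tsum_eq_single (some (a₁ - v₁ + v₂)) (fun o ho => hzero1 a₁ o ho)]
    exact hval a₁
  have hmarg2 : ∀ a₂ : ℤ, ∑' o, μ (o, some a₂) = lap ε v₂ a₂ := by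
    intro a₂
    rw [tsum_eq_single (some (a₂ - v₂ + v₁))]
    · have : μ (some (a₂ - v₂ + v₁), some a₂) = lap ε v₁ (a₂ - v₂ + v₁) := by
        simp only [hμ]; rw [if_pos (by omega)]
      rw [this]
      exact lap_congr ε v₁ v₂ _ a₂ (by omega)
    · intro o ho
      match o with
      | none => simp [hμ]
      | some a =>
        simp only [hμ]; rw [if_neg]; intro h; exact ho (by congr 1; omega)
  have hsub : IsSubDist μ := by
    unfold IsSubDist
    have hinj : Function.Injective (fun a : ℤ => ((some a, some (a - v₁ + v₂)) : Option ℤ × Option ℤ)) := by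
      intro a b hab
      have := congrArg Prod.fst hab
      simpa using this
    have hsupp : Function.support μ ⊆ Set.range (fun a : ℤ => ((some a, some (a - v₁ + v₂)) : Option ℤ × Option ℤ)) := by
      intro p hp
      match p with
      | (some a, some b) =>
        simp only [hμ, Function.mem_support] at hp
        by_cases hb : b = a - v₁ + v₂
        · exact ⟨a, by rw [hb]⟩
        · exact absurd (if_neg hb) hp
      | (some a, none) => exact absurd rfl hp
      | (none, some b) => exact absurd rfl hp
      | (none, none) => exact absurd rfl hp
    have := hinj.tsum_eq (f := μ) hsupp
    rw [← this]
    rw [show (∑' a : ℤ, μ (some a, some (a - v₁ + v₂))) = ∑' a : ℤ, lap ε v₁ a from tsum_congr hval,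
      lap_tsum ε hε v₁]
  refine ⟨μ, μ, hsub, hsub, hmarg1, fun o => rfl, hmarg2, ?_, ?_, ?_, ?_⟩
  · intro o; match o with
    | none => rfl
    | some a => rfl
  · intro p hp
    match p with
    | (some a, some b) =>
      simp only [hμ, Set.mem_setOf_eq] at hp
      by_cases hb : b = a - v₁ + v₂
      · simp only [starRel, Set.mem_setOf_eq]; omega
      · exact absurd (if_neg hb) hp
    | (some a, none) => exact absurd rfl hp
    | (none, some b) => exact absurd rfl hp
    | (none, none) => exact absurd rfl hp
  · intro p hp
    match p with
    | (some a, some b) =>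
      simp only [hμ, Set.mem_setOf_eq] at hp
      by_cases hb : b = a - v₁ + v₂
      · simp only [starRel, Set.mem_setOf_eq]; omega
      · exact absurd (if_neg hb) hp
    | (some a, none) => exact absurd rfl hp
    | (none, some b) => exact absurd rfl hp
    | (none, none) => exact absurd rfl hp
  · intro S
    simp [Real.exp_zero]
end
end

section
/- (Shift coupling of Laplace distributions.) Let k, k', v₁, v₂ ∈ ℤ with |k + v₁ − v₂| ≤ k' and ε > 0. Then there is a (k'·ε, 0)-approximate lifting of the relation {(x₁,x₂) ∈ ℤ×ℤ : x₁ + k = x₂} relating Lap_ε(v₁) and Lap_ε(v₂). -/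
open scoped ENNReal

noncomputable section

/-!
Since `|(x + k - v₂) - (x - v₁)| = |k + v₁ - v₂| ≤ k'`, the triangle inequality gives the pointwise
bound `lap ε v₁ x ≤ e^{k'ε} · lap ε v₂ (x + k)`. Pushing `lap ε v₁` and `lap ε v₂` forward along the
graph of the bijection `x ↦ x + k` therefore gives two witnesses with no mass on `⋆`, supported on the
relation, and with the pointwise (hence setwise) ratio `e^{k'ε}`.
-/

section GraphLift

variable {A₁ A₂ : Type*} (e : A₁ ≃ A₂)

open Classical in
def graphLift (μ : A₁ → ℝ≥0∞) : Option A₁ × Option A₂ → ℝ≥0∞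
  | (some a, some b) => if e a = b then μ a else 0
  | _ => 0

variable {e}

lemma graphLift_some_some (μ : A₁ → ℝ≥0∞) (a : A₁) :
    graphLift e μ (some a, some (e a)) = μ a := by
  simp [graphLift]

lemma graphLift_none_left (μ : A₁ → ℝ≥0∞) (o : Option A₂) : graphLift e μ (none, o) = 0 := by
  cases o <;> rfl

lemma graphLift_none_right (μ : A₁ → ℝ≥0∞) (o : Option A₁) : graphLift e μ (o, none) = 0 := by
  cases o <;> rfl

lemma support_graphLift_subset_range (μ : A₁ → ℝ≥0∞) :
    Function.support (graphLift e μ) ⊆ Set.range fun a => (some a, some (e a)) := by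
  intro p hp
  obtain ⟨_ | a, _ | b⟩ := p <;> try exact absurd rfl hp
  by_cases hab : e a = b
  · exact ⟨a, by simp [hab]⟩
  · simp [graphLift, hab] at hp

lemma tsum_graphLift (μ : A₁ → ℝ≥0∞) : ∑' p, graphLift e μ p = ∑' a, μ a := by
  rw [← Function.Injective.tsum_eq (g := fun a => (some a, some (e a)))]
  · simp only [graphLift_some_some]
  · intro a b h
    simpa using congrArg Prod.fst h
  · exact support_graphLift_subset_range μ

lemma tsum_graphLift_some_left (μ : A₁ → ℝ≥0∞) (a : A₁) :
    ∑' o, graphLift e μ (some a, o) = μ a := by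
  rw [tsum_eq_single (some (e a)), graphLift_some_some]
  rintro (_ | b) hb
  · rfl
  · have hab : e a ≠ b := fun h => hb (h ▸ rfl)
    simp [graphLift, hab]

lemma tsum_graphLift_some_right (μ : A₁ → ℝ≥0∞) (b : A₂) :
    ∑' o, graphLift e μ (o, some b) = μ (e.symm b) := by
  rw [tsum_eq_single (some (e.symm b))]
  · simpa using graphLift_some_some (e := e) μ (e.symm b)
  rintro (_ | a) ha
  · rfl
  · have hab : e a ≠ b := fun h => ha (by rw [← h, e.symm_apply_apply])
    simp [graphLift, hab]

lemma graphLift_support_subset_starRel {R : Set (A₁ × A₂)} (hR : ∀ a, (a, e a) ∈ R)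
    (μ : A₁ → ℝ≥0∞) : {p | graphLift e μ p ≠ 0} ⊆ starRel R := by
  intro p hp
  obtain ⟨a, rfl⟩ := support_graphLift_subset_range μ hp
  exact hR a

lemma graphLift_le_mul {μ ν : A₁ → ℝ≥0∞} {c : ℝ≥0∞} (h : ∀ a, μ a ≤ c * ν a)
    (p : Option A₁ × Option A₂) : graphLift e μ p ≤ c * graphLift e ν p := by
  obtain ⟨_ | a, _ | b⟩ := p
  all_goals try exact zero_le
  by_cases hab : e a = b <;> simp [graphLift, hab, h a]

end GraphLift

theorem approxLift_of_equiv {A₁ A₂ : Type*} {ε : ℝ} {R : Set (A₁ × A₂)}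
    {μ₁ : A₁ → ℝ≥0∞} {μ₂ : A₂ → ℝ≥0∞} (e : A₁ ≃ A₂) (hR : ∀ a, (a, e a) ∈ R)
    (hμ₁ : IsSubDist μ₁) (hμ₂ : IsSubDist μ₂)
    (hle : ∀ a, μ₁ a ≤ ENNReal.ofReal (Real.exp ε) * μ₂ (e a)) :
    ApproxLift ε 0 R μ₁ μ₂ := by
  refine ⟨graphLift e μ₁, graphLift e (fun a => μ₂ (e a)), ?_, ?_, tsum_graphLift_some_left μ₁,
    graphLift_none_left μ₁, fun b => ?_, graphLift_none_right _,
    graphLift_support_subset_starRel hR _, graphLift_support_subset_starRel hR _, fun S => ?_⟩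
  · rwa [IsSubDist, tsum_graphLift]
  · rwa [IsSubDist, tsum_graphLift, e.tsum_eq μ₂]
  · rw [tsum_graphLift_some_right, e.apply_symm_apply]
  · rw [ENNReal.ofReal_zero, add_zero, setSum, setSum, ← ENNReal.tsum_mul_left]
    exact ENNReal.tsum_le_tsum fun p => graphLift_le_mul (e := e) hle p

lemma summable_exp_neg_mul_abs_int {ε : ℝ} (hε : 0 < ε) :
    Summable fun z : ℤ => Real.exp (-ε * |(z : ℝ)|) := by
  have h : Summable fun n : ℕ => Real.exp (n * -ε) := Real.summable_exp_nat_mul_iff.2 (by linarith)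
  refine .of_nat_of_neg (h.congr fun n => ?_) (h.congr fun n => ?_) <;> simp [mul_comm]

lemma tsum_lap {ε : ℝ} (hε : 0 < ε) (t : ℤ) : ∑' v, lap ε t v = 1 := by
  set f : ℤ → ℝ := fun z => Real.exp (-ε * |(z : ℝ)|)
  have hf := summable_exp_neg_mul_abs_int hε
  have hW : 0 < ∑' z, f z := hf.tsum_pos (fun _ => (Real.exp_pos _).le) 0 (Real.exp_pos _)
  calc ∑' v, lap ε t v = ∑' z, ENNReal.ofReal (f z / ∑' z, f z) :=
        (Equiv.subRight t).tsum_eq fun z => ENNReal.ofReal (f z / ∑' z, f z)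
    _ = 1 := by
      rw [← ENNReal.ofReal_tsum_of_nonneg (fun z => by positivity) (hf.div_const _),
        tsum_div_const, div_self hW.ne', ENNReal.ofReal_one]

lemma lap_le_exp_mul_lap {ε : ℝ} (hε : 0 ≤ ε) {d t t' v v' : ℤ}
    (h : |(v' - t') - (v - t)| ≤ d) :
    lap ε t v ≤ ENNReal.ofReal (Real.exp (d * ε)) * lap ε t' v' := by
  have hdist : |((v' - t' : ℤ) : ℝ)| ≤ |((v - t : ℤ) : ℝ)| + d := by
    have := abs_sub_abs_le_abs_sub (v' - t') (v - t)
    exact_mod_cast (by linarith : |v' - t'| ≤ |v - t| + d)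
  rw [lap, lap, ← ENNReal.ofReal_mul (Real.exp_pos _).le, ← mul_div_assoc, ← Real.exp_add]
  refine ENNReal.ofReal_le_ofReal (div_le_div_of_nonneg_right (Real.exp_le_exp.2 ?_)
    (tsum_nonneg fun _ => (Real.exp_pos _).le))
  linarith [mul_le_mul_of_nonneg_left hdist hε]

theorem lap_shift_coupling (ε : ℝ) (hε : 0 < ε) (k k' v₁ v₂ : ℤ)
    (h : |k + v₁ - v₂| ≤ k') :
    ApproxLift ((k' : ℝ) * ε) 0 {p : ℤ × ℤ | p.1 + k = p.2}
      (lap ε v₁) (lap ε v₂) := by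
  refine approxLift_of_equiv (Equiv.addRight k) (fun _ => rfl)
    (tsum_lap hε v₁).le (tsum_lap hε v₂).le fun x => lap_le_exp_mul_lap hε.le ?_
  rwa [Equiv.coe_addRight, show x + k - v₂ - (x - v₁) = k + v₁ - v₂ by ring]

end
end

section
/- (Choice coupling.) Let μ₁, μ₂ be sub-distributions over A₁, A₂, P ⊆ A₁ a predicate, and suppose there are (ε,δ)-approximate liftings of relations R and S relating μ₁ and μ₂, such that R(P) ∩ S(A₁∖P) = ∅, where R(P) is the image of P under R. Then there is an (ε, 2δ)-approximate lifting relating μ₁ and μ₂ of the relation T = {(a₁,a₂) : (a₁ ∈ P → (a₁,a₂) ∈ R) ∧ (a₁ ∉ P → (a₁,a₂) ∈ S)}. -/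
open scoped ENNReal

noncomputable section

/-!
Glue the two liftings row by row: on a row `a₁ ∈ P` take the `R`-witnesses, on the other rows
the `S`-witnesses. The glued left witness keeps the first marginal `μ₁`. The glued right witness
may lose mass in the second marginal (its `⋆` row is dropped), so the `⋆` row is refilled with the
missing mass. That is possible because `R(P) ∩ S(A₁ ∖ P) = ∅` makes each column `a₂` of the glued
right witness come from a single one of the two original witnesses, whence its mass is at most
`μ₂ a₂`. A set `U` splits into its `P`-rows and its other rows; adding the two distance
inequalities gives the additive error `2δ`.
-/

lemma ENNReal.tsum_option {α : Type*} (f : Option α → ℝ≥0∞) :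
    ∑' o, f o = f none + ∑' a, f (some a) := by
  rw [← (Equiv.optionEquivSumPUnit.{0} α).symm.tsum_eq, ENNReal.summable.tsum_sum ENNReal.summable,
    add_comm]
  simp

section Lifting

variable {A₁ A₂ : Type*}

lemma tsum_eq_tsum_of_fst_marginal {μ : Option A₁ × Option A₂ → ℝ≥0∞} {μ₁ : A₁ → ℝ≥0∞}
    (hnone : ∀ o, μ (none, o) = 0) (hμ : ∀ a₁, ∑' o, μ (some a₁, o) = μ₁ a₁) :
    ∑' p, μ p = ∑' a₁, μ₁ a₁ := by
  rw [ENNReal.tsum_prod', ENNReal.tsum_option]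
  simp only [hnone, tsum_zero, zero_add, hμ]

lemma tsum_eq_tsum_of_snd_marginal {μ : Option A₁ × Option A₂ → ℝ≥0∞} {μ₂ : A₂ → ℝ≥0∞}
    (hnone : ∀ o, μ (o, none) = 0) (hμ : ∀ a₂, ∑' o, μ (o, some a₂) = μ₂ a₂) :
    ∑' p, μ p = ∑' a₂, μ₂ a₂ := by
  rw [ENNReal.tsum_prod', ENNReal.tsum_comm, ENNReal.tsum_option]
  simp only [hnone, tsum_zero, zero_add, hμ]

lemma ApproxLift.isSubDist_fst {ε δ : ℝ} {R : Set (A₁ × A₂)} {μ₁ : A₁ → ℝ≥0∞}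
    {μ₂ : A₂ → ℝ≥0∞} (h : ApproxLift ε δ R μ₁ μ₂) : IsSubDist μ₁ := by
  obtain ⟨μL, -, hL, -, hm, hn, -⟩ := h
  exact (tsum_eq_tsum_of_fst_marginal hn hm).symm.trans_le hL

lemma ApproxLift.isSubDist_snd {ε δ : ℝ} {R : Set (A₁ × A₂)} {μ₁ : A₁ → ℝ≥0∞}
    {μ₂ : A₂ → ℝ≥0∞} (h : ApproxLift ε δ R μ₁ μ₂) : IsSubDist μ₂ := by
  obtain ⟨-, μR, -, hR, -, -, hm, hn, -⟩ := h
  exact (tsum_eq_tsum_of_snd_marginal hn hm).symm.trans_le hR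

lemma eq_zero_of_support_subset_starRel {R : Set (A₁ × A₂)} {μ : Option A₁ × Option A₂ → ℝ≥0∞}
    (hμ : {p | μ p ≠ 0} ⊆ starRel R) {a₁ : A₁} {a₂ : A₂} (h : (a₁, a₂) ∉ R) :
    μ (some a₁, some a₂) = 0 :=
  not_not.1 fun hne => h (hμ hne)

lemma notMem_or_notMem_of_relImage_inter_eq_empty {P : Set A₁} {R S : Set (A₁ × A₂)}
    (hdisj : relImage R P ∩ relImage S Pᶜ = ∅) (a₂ : A₂) :
    (∀ a₁ ∉ P, (a₁, a₂) ∉ S) ∨ (∀ a₁ ∈ P, (a₁, a₂) ∉ R) := by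
  by_contra! h
  obtain ⟨⟨a₁, ha₁, hS⟩, ⟨a₁', ha₁', hR⟩⟩ := h
  exact (Set.eq_empty_iff_forall_notMem.1 hdisj) a₂ ⟨⟨a₁', ha₁', hR⟩, a₁, ha₁, hS⟩

def choiceRel (P : Set A₁) (R S : Set (A₁ × A₂)) : Set (A₁ × A₂) :=
  {p | (p.1 ∈ P → p ∈ R) ∧ (p.1 ∉ P → p ∈ S)}

open Classical in
def rowChoice (P : Set A₁) (f g : Option A₁ × Option A₂ → ℝ≥0∞) :
    Option A₁ × Option A₂ → ℝ≥0∞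
  | (none, _) => 0
  | (some a₁, o) => if a₁ ∈ P then f (some a₁, o) else g (some a₁, o)

def topUp (μ₂ : A₂ → ℝ≥0∞) (ν : Option A₁ × Option A₂ → ℝ≥0∞) :
    Option A₁ × Option A₂ → ℝ≥0∞
  | (none, none) => 0
  | (none, some a₂) => μ₂ a₂ - ∑' a₁, ν (some a₁, some a₂)
  | (some a₁, o) => ν (some a₁, o)

section rowChoice

variable {P : Set A₁} {f g : Option A₁ × Option A₂ → ℝ≥0∞}

@[simp]
lemma rowChoice_none (o : Option A₂) : rowChoice P f g (none, o) = 0 := rfl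

lemma tsum_rowChoice_some {μ₁ : A₁ → ℝ≥0∞} (hf : ∀ a₁, ∑' o, f (some a₁, o) = μ₁ a₁)
    (hg : ∀ a₁, ∑' o, g (some a₁, o) = μ₁ a₁) (a₁ : A₁) :
    ∑' o, rowChoice P f g (some a₁, o) = μ₁ a₁ := by
  by_cases ha₁ : a₁ ∈ P <;> simp [rowChoice, ha₁, hf, hg]

lemma rowChoice_snd_none (hf : ∀ o, f (o, none) = 0) (hg : ∀ o, g (o, none) = 0)
    (o : Option A₁) : rowChoice P f g (o, none) = 0 := by
  rcases o with _ | a₁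
  · rfl
  · by_cases ha₁ : a₁ ∈ P <;> simp [rowChoice, ha₁, hf, hg]

lemma support_rowChoice_subset {R S : Set (A₁ × A₂)} (hf : {p | f p ≠ 0} ⊆ starRel R)
    (hg : {p | g p ≠ 0} ⊆ starRel S) :
    {p | rowChoice P f g p ≠ 0} ⊆ starRel (choiceRel P R S) := by
  rintro ⟨_ | a₁, _ | a₂⟩ hp
  · exact hp rfl
  · trivial
  · trivial
  · by_cases ha₁ : a₁ ∈ P
    · have hR : (a₁, a₂) ∈ R := hf (by simpa [rowChoice, ha₁] using hp)
      exact ⟨fun _ => hR, fun h => absurd ha₁ h⟩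
    · have hS : (a₁, a₂) ∈ S := hg (by simpa [rowChoice, ha₁] using hp)
      exact ⟨fun h => absurd h ha₁, fun _ => hS⟩

lemma setSum_rowChoice (U : Set (Option A₁ × Option A₂)) :
    setSum (rowChoice P f g) U =
      setSum f (U ∩ Prod.fst ⁻¹' (some '' P)) + setSum g (U ∩ Prod.fst ⁻¹' (some '' Pᶜ)) := by
  simp only [setSum, tsum_subtype]
  rw [← ENNReal.tsum_add]
  congr 1
  ext ⟨_ | a₁, o⟩
  · simp [Set.indicator]
  · by_cases hU : (some a₁, o) ∈ U <;> by_cases ha₁ : a₁ ∈ P <;>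
      simp [Set.indicator, rowChoice, hU, ha₁]

lemma setSum_rowChoice_le {f' g' : Option A₁ × Option A₂ → ℝ≥0∞} {c d : ℝ≥0∞}
    (hf : ∀ U, setSum f U ≤ c * setSum f' U + d) (hg : ∀ U, setSum g U ≤ c * setSum g' U + d)
    (U : Set (Option A₁ × Option A₂)) :
    setSum (rowChoice P f g) U ≤ c * setSum (rowChoice P f' g') U + 2 * d := by
  rw [setSum_rowChoice, setSum_rowChoice, mul_add, two_mul]
  calc _ ≤ (c * setSum f' (U ∩ Prod.fst ⁻¹' (some '' P)) + d) +
        (c * setSum g' (U ∩ Prod.fst ⁻¹' (some '' Pᶜ)) + d) := add_le_add (hf _) (hg _)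
    _ = _ := by ring

lemma tsum_rowChoice_some_some_le {μ₂ : A₂ → ℝ≥0∞} (hf : ∀ a₂, ∑' o, f (o, some a₂) = μ₂ a₂)
    (hg : ∀ a₂, ∑' o, g (o, some a₂) = μ₂ a₂) (a₂ : A₂)
    (hzero : (∀ a₁ ∉ P, g (some a₁, some a₂) = 0) ∨ (∀ a₁ ∈ P, f (some a₁, some a₂) = 0)) :
    ∑' a₁, rowChoice P f g (some a₁, some a₂) ≤ μ₂ a₂ := by
  have hcol (h : Option A₁ × Option A₂ → ℝ≥0∞) :
      ∑' a₁, h (some a₁, some a₂) ≤ ∑' o, h (o, some a₂) := by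
    rw [ENNReal.tsum_option]
    exact le_add_self
  rcases hzero with hg0 | hf0
  · calc _ ≤ ∑' a₁, f (some a₁, some a₂) := ENNReal.tsum_le_tsum fun a₁ => by
          by_cases ha₁ : a₁ ∈ P <;> simp [rowChoice, ha₁, hg0]
      _ ≤ μ₂ a₂ := hf a₂ ▸ hcol f
  · calc _ ≤ ∑' a₁, g (some a₁, some a₂) := ENNReal.tsum_le_tsum fun a₁ => by
          by_cases ha₁ : a₁ ∈ P <;> simp [rowChoice, ha₁, hf0]
      _ ≤ μ₂ a₂ := hg a₂ ▸ hcol g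

end rowChoice

section topUp

variable {μ₂ : A₂ → ℝ≥0∞} {ν : Option A₁ × Option A₂ → ℝ≥0∞}

lemma topUp_snd_none (hν : ∀ o, ν (o, none) = 0) (o : Option A₁) : topUp μ₂ ν (o, none) = 0 := by
  rcases o with _ | a₁
  · rfl
  · exact hν _

lemma tsum_topUp_fst {a₂ : A₂} (hν : ∑' a₁, ν (some a₁, some a₂) ≤ μ₂ a₂) :
    ∑' o, topUp μ₂ ν (o, some a₂) = μ₂ a₂ := by
  rw [ENNReal.tsum_option]
  exact tsub_add_cancel_of_le hν

lemma support_topUp_subset {T : Set (A₁ × A₂)} (hν : {p | ν p ≠ 0} ⊆ starRel T) :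
    {p | topUp μ₂ ν p ≠ 0} ⊆ starRel T := by
  rintro ⟨_ | a₁, _ | a₂⟩ hp
  · exact hp rfl
  · trivial
  · exact hν hp
  · exact hν hp

lemma setSum_le_setSum_topUp (hν : ∀ o, ν (none, o) = 0) (U : Set (Option A₁ × Option A₂)) :
    setSum ν U ≤ setSum (topUp μ₂ ν) U := by
  refine ENNReal.tsum_le_tsum fun ⟨⟨o₁, o₂⟩, _⟩ => ?_
  rcases o₁ with _ | a₁
  · simp [hν]
  · rfl

end topUp

end Lifting

theorem choice_coupling_general {A₁ A₂ : Type*}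
    (μ₁ : A₁ → ℝ≥0∞) (μ₂ : A₂ → ℝ≥0∞)
    (P : Set A₁) (R S : Set (A₁ × A₂)) (ε δ : ℝ)
    (hR : ApproxLift ε δ R μ₁ μ₂) (hS : ApproxLift ε δ S μ₁ μ₂)
    (hdisj : relImage R P ∩ relImage S Pᶜ = ∅) :
    ApproxLift ε (2 * δ)
      {p : A₁ × A₂ | (p.1 ∈ P → p ∈ R) ∧ (p.1 ∉ P → p ∈ S)} μ₁ μ₂ := by
  have h₁ := hR.isSubDist_fst
  have h₂ := hR.isSubDist_snd
  obtain ⟨μLR, μRR, -, -, hLRm, -, hRRm, hRRn, hLRsupp, hRRsupp, hRdist⟩ := hR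
  obtain ⟨μLS, μRS, -, -, hLSm, -, hRSm, hRSn, hLSsupp, hRSsupp, hSdist⟩ := hS
  have hcol (a₂ : A₂) : ∑' a₁, rowChoice P μRR μRS (some a₁, some a₂) ≤ μ₂ a₂ :=
    tsum_rowChoice_some_some_le hRRm hRSm a₂ <|
      (notMem_or_notMem_of_relImage_inter_eq_empty hdisj a₂).imp
        (fun h a₁ ha₁ => eq_zero_of_support_subset_starRel hRSsupp (h a₁ ha₁))
        (fun h a₁ ha₁ => eq_zero_of_support_subset_starRel hRRsupp (h a₁ ha₁))
  have hLm := tsum_rowChoice_some (P := P) hLRm hLSm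
  have hRm (a₂ : A₂) := tsum_topUp_fst (hcol a₂)
  have hRn := topUp_snd_none (μ₂ := μ₂) (rowChoice_snd_none (P := P) hRRn hRSn)
  refine ⟨rowChoice P μLR μLS, topUp μ₂ (rowChoice P μRR μRS),
    (tsum_eq_tsum_of_fst_marginal rowChoice_none hLm).trans_le h₁,
    (tsum_eq_tsum_of_snd_marginal hRn hRm).trans_le h₂, hLm, rowChoice_none, hRm, hRn,
    support_rowChoice_subset hLRsupp hLSsupp,
    support_topUp_subset (support_rowChoice_subset hRRsupp hRSsupp), fun U => ?_⟩
  calc setSum (rowChoice P μLR μLS) U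
      ≤ ENNReal.ofReal (Real.exp ε) * setSum (rowChoice P μRR μRS) U + 2 * ENNReal.ofReal δ :=
        setSum_rowChoice_le hRdist hSdist U
    _ ≤ ENNReal.ofReal (Real.exp ε) * setSum (topUp μ₂ (rowChoice P μRR μRS)) U +
        ENNReal.ofReal (2 * δ) := by
        rw [ENNReal.ofReal_mul zero_le_two, ENNReal.ofReal_ofNat]
        gcongr
        exact setSum_le_setSum_topUp rowChoice_none U

theorem choice_coupling {A₁ A₂ : Type*} [Countable A₁] [Countable A₂]
    (μ₁ : A₁ → ℝ≥0∞) (μ₂ : A₂ → ℝ≥0∞)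
    (h₁ : IsSubDist μ₁) (h₂ : IsSubDist μ₂)
    (P : Set A₁) (R S : Set (A₁ × A₂)) (ε δ : ℝ)
    (hR : ApproxLift ε δ R μ₁ μ₂) (hS : ApproxLift ε δ S μ₁ μ₂)
    (hdisj : relImage R P ∩ relImage S Pᶜ = ∅) :
    ApproxLift ε (2 * δ)
      {p : A₁ × A₂ | (p.1 ∈ P → p ∈ R) ∧ (p.1 ∉ P → p ∈ S)} μ₁ μ₂ :=
  choice_coupling_general μ₁ μ₂ P R S ε δ hR hS hdisj
end
end
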